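/- arXiv:1112.4889 — 3 statements merged into one kernel-verified Lean document; each statement's English description precedes it below -/
import Mathlib

section
/- Let w be a complex-valued function on representations of a group that is multiplicative on direct sums, and suppose inductivity in degree 0 holds: for a quadratic setting with induction Ind from a subgroup H of index 2 cutting out a character χ, w(Ind W) / w(Ind 1_H)^{dim W} = w_H(W) / w_H(1)^{dim W} for all H-representations W, and Ind 1_H = 1 ⊕ χ. Then for any representation V of the big group of dimension 2g, w(V)·w(V ⊗ χ) = w_H(Res V) · (w(1)·w(χ))^{2g} / w_H(1)^{2g}; in particular if w(1) = w_H(1) = 1 and w(χ)² = χ(−1), then w(V)·w(V⊗χ) = w_H(Res V)·χ(−1)^g. -/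
/-! Apply inductivity in degree zero to `W = Res V`: the projection formula turns `Ind (Res V)`
into `V ⊕ (V ⊗ χ)` and `Ind 1_H = 1 ⊕ χ`, so `w(V) w(V ⊗ χ)` is `w_H(Res V)` times the factor
`(w(1) w(χ) / w_H(1))^{dim Res V}`. With `w(1) = w_H(1) = 1` and `dim Res V = 2g` that factor
is `(w(χ)²)^g = χ(−1)^g`. -/

theorem mul_map_twist_eq_of_inductive {RG RH M : Type*} [CommMonoid RG] [CommGroup M]
    (w : RG → M) (wH : RH → M) (hw : ∀ a b : RG, w (a * b) = w a * w b)
    (Ind : RH → RG) (Res : RG → RH) (tw : RG → RG) (dimH : RH → ℕ) (tG : RG) (tH : RH)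
    (chiG : RG)
    (hInd0 : ∀ W : RH,
      w (Ind W) * ((w (Ind tH)) ^ (dimH W))⁻¹ = wH W * ((wH tH) ^ (dimH W))⁻¹)
    (hIndtriv : Ind tH = tG * chiG) (V : RG) (hproj : Ind (Res V) = V * tw V) :
    w V * w (tw V) = wH (Res V) * ((w tG * w chiG) / wH tH) ^ dimH (Res V) := by
  have h := hInd0 (Res V)
  rw [hproj, hIndtriv, hw, hw, ← div_eq_mul_inv, div_eq_iff_eq_mul] at h
  rw [h, div_pow, mul_div_assoc', div_eq_mul_inv _ (wH tH ^ _), mul_right_comm]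

theorem stmt9_general {RG RH : Type*} [CommMonoid RG] [CommMonoid RH]
    (w : RG → ℂˣ) (wH : RH → ℂˣ)
    (hw : ∀ a b : RG, w (a * b) = w a * w b)
    (Ind : RH → RG) (Res : RG → RH) (tw : RG → RG)
    (dimH : RH → ℕ) (tG : RG) (tH : RH) (chiG : RG) (ε : ℂˣ)
    (hInd0 : ∀ W : RH,
      w (Ind W) * ((w (Ind tH)) ^ (dimH W))⁻¹ = wH W * ((wH tH) ^ (dimH W))⁻¹)
    (hIndtriv : Ind tH = tG * chiG)
    (htG : w tG = 1) (htH : wH tH = 1)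
    (hchi : (w chiG) ^ 2 = ε)
    (V : RG) (g : ℕ)
    (hproj : Ind (Res V) = V * tw V)
    (hdim : dimH (Res V) = 2 * g) :
    w V * w (tw V) = wH (Res V) * ε ^ g := by
  rw [mul_map_twist_eq_of_inductive w wH hw Ind Res tw dimH tG tH chiG hInd0 hIndtriv V hproj,
    htG, htH, one_mul, div_one, hdim, pow_mul, hchi]

/-- Formal root-number calculus (Lemma on quadratic twists): model isomorphism
classes of finite-dimensional complex representations of `G` and of an index-2
subgroup `H` by commutative monoids `RG`, `RH` whose multiplication is direct
sum. Given multiplicative root numbers `w : RG → ℂˣ`, `wH : RH → ℂˣ`, an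
induction map `Ind : RH → RG`, a restriction `Res : RG → RG`-to-`RH` map, a
dimension function, twisting `tw` by the quadratic character `χ` (with class
`chiG : RG` and value `ε = χ(−1)`), suppose:
* inductivity in degree `0`: `w(Ind W)/w(Ind 1_H)^{dim W} = wH(W)/wH(1_H)^{dim W}`;
* `Ind 1_H = 1 ⊕ χ`;
* the projection formula `Ind(Res V) = V ⊕ (V ⊗ χ)`;
* `w(1) = wH(1_H) = 1` and `w(χ)² = χ(−1)`.
Then for `V` with `dim Res V = 2g`, `w(V)·w(V ⊗ χ) = wH(Res V)·χ(−1)^g`. -/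
theorem stmt9 {RG RH : Type*} [CommMonoid RG] [CommMonoid RH]
    (w : RG → ℂˣ) (wH : RH → ℂˣ)
    (hw : ∀ a b : RG, w (a * b) = w a * w b)
    (hwH : ∀ a b : RH, wH (a * b) = wH a * wH b)
    (Ind : RH → RG) (Res : RG → RH) (tw : RG → RG)
    (dimH : RH → ℕ) (tG : RG) (tH : RH) (chiG : RG) (ε : ℂˣ)
    (hInd0 : ∀ W : RH,
      w (Ind W) * ((w (Ind tH)) ^ (dimH W))⁻¹ = wH W * ((wH tH) ^ (dimH W))⁻¹)
    (hIndtriv : Ind tH = tG * chiG)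
    (htG : w tG = 1) (htH : wH tH = 1)
    (hchi : (w chiG) ^ 2 = ε)
    (V : RG) (g : ℕ)
    (hproj : Ind (Res V) = V * tw V)
    (hdim : dimH (Res V) = 2 * g) :
    w V * w (tw V) = wH (Res V) * ε ^ g :=
  stmt9_general w wH hw Ind Res tw dimH tG tH chiG ε hInd0 hIndtriv htG htH hchi V g hproj hdim
end

section
/- Let z = (√3 + i)/2 ∈ ℂ (a primitive 12th root of unity) and let α be a complex fourth root of 2√3 − 3. Then β := (z² + z)·α satisfies β⁴ = −2√3 − 3, and the eight roots of x⁸ + 6x⁴ − 3 are i^k·α and i^k·β for k = 0,1,2,3. -/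
open Complex

/-! Since `z² + z = (1 + √3)(1 + i)/2`, its fourth power is `-(7 + 4√3)`, and
`(2√3 − 3)(7 + 4√3) = 2√3 + 3`. The octic factors as `(x⁴ − α⁴)(x⁴ − β⁴)`, and each
factor `x⁴ − c⁴` splits as `∏ₖ (x − iᵏc)` because `i` is a primitive fourth root of unity. -/

lemma IsPrimitiveRoot.pow_sub_pow_eq_prod_range {R : Type*} [CommRing R] [IsDomain R]
    {n : ℕ} {ζ : R} (hζ : IsPrimitiveRoot ζ n) (hn : 0 < n) (x c : R) :
    x ^ n - c ^ n = ∏ k ∈ Finset.range n, (x - ζ ^ k * c) := by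
  simpa [Polynomial.eval_prod] using
    congrArg (Polynomial.eval x) (X_pow_sub_C_eq_prod hζ hn rfl)

lemma ofReal_sqrt_three_sq : (Real.sqrt 3 : ℂ) ^ 2 = 3 := by
  rw [← ofReal_pow, Real.sq_sqrt (by norm_num)]
  norm_num

lemma sqrt_three_add_I_div_two_sq_add_self_pow_four :
    let z : ℂ := ((Real.sqrt 3 : ℂ) + I) / 2
    (z ^ 2 + z) ^ 4 = -(7 + 4 * (Real.sqrt 3 : ℂ)) := by
  intro z
  have hs := ofReal_sqrt_three_sq
  have hz : z ^ 2 + z = (1 + Real.sqrt 3) * (1 + I) / 2 := by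
    linear_combination hs / 4 + I_sq / 4
  rw [hz, div_pow, mul_pow]
  have h1 : (1 + I) ^ 4 = -4 := by linear_combination (I ^ 2 + 4 * I + 5) * I_sq
  have h2 : (1 + (Real.sqrt 3 : ℂ)) ^ 4 = 28 + 16 * Real.sqrt 3 := by
    linear_combination (Real.sqrt 3 ^ 2 + 4 * Real.sqrt 3 + 9 : ℂ) * hs
  rw [h1, h2]
  ring

/-- Let `z = (√3 + i)/2` (a primitive 12th root of unity) and let `α` be a
complex fourth root of `2√3 − 3`. Then `β = (z² + z)·α` satisfies
`β⁴ = −2√3 − 3`, and the eight roots of `x⁸ + 6x⁴ − 3` are `iᵏα` and `iᵏβ` for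
`k = 0, 1, 2, 3`. -/
theorem stmt14 (α : ℂ) (hα : α ^ 4 = 2 * (Real.sqrt 3 : ℂ) - 3) :
    let z : ℂ := ((Real.sqrt 3 : ℂ) + I) / 2
    let β : ℂ := (z ^ 2 + z) * α
    β ^ 4 = -2 * (Real.sqrt 3 : ℂ) - 3 ∧
    ∀ x : ℂ, x ^ 8 + 6 * x ^ 4 - 3 =
      ∏ k ∈ Finset.range 4, ((x - I ^ k * α) * (x - I ^ k * β)) := by
  intro z β
  have hs := ofReal_sqrt_three_sq
  have hβ : β ^ 4 = -2 * (Real.sqrt 3 : ℂ) - 3 := by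
    rw [mul_pow, sqrt_three_add_I_div_two_sq_add_self_pow_four, hα]
    linear_combination (-8 : ℂ) * hs
  refine ⟨hβ, fun x => ?_⟩
  have hsplit := isPrimitiveRoot_I.pow_sub_pow_eq_prod_range four_pos x
  calc x ^ 8 + 6 * x ^ 4 - 3 = (x ^ 4 - α ^ 4) * (x ^ 4 - β ^ 4) := by
        rw [hα, hβ]
        linear_combination (4 : ℂ) * hs
    _ = ∏ k ∈ Finset.range 4, ((x - I ^ k * α) * (x - I ^ k * β)) := by
        rw [Finset.prod_mul_distrib, hsplit, hsplit]
end

section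
/- Neither x⁴ + (4/3)x³ + x² + (4/3)x + 1 nor x⁴ + x³ + (16/9)x² + x + 1 has a monic irreducible factor in ℤ[x] with constant term 1; equivalently, no root of either polynomial is an algebraic integer all of whose conjugates multiply to ±1 with minimal polynomial monic with constant coefficient 1. Concretely: neither polynomial has a root that is a root of a monic polynomial in ℤ[x] with constant term 1 dividing it in ℚ[x]. -/
open Polynomial

/-!
Write `p = g * q` with `g` a monic integer factor and `g(0) = 1`. The cofactor `q ∈ ℚ[X]` is
then also monic with `q(0) = 1`, so a factor of degree 1 or 3 produces the factor `X + 1` of `p`,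
which is excluded by `p(-1) ≠ 0`, and `g = p` is excluded because `p` has a non-integral
coefficient. A quadratic factor `X² + bX + 1` of the palindromic quartic
`X⁴ + aX³ + cX² + aX + 1` forces `b² - ab + c - 2 = 0`, which has no integer solution for
`(a, c) = (4/3, 1)` or `(1, 16/9)`.
-/

namespace Polynomial

variable {R : Type*}

theorem Monic.eq_X_sq_add_C_mul_X_add_C [Semiring R] {p : R[X]} (hp : p.Monic)
    (h : p.natDegree = 2) : p = X ^ 2 + C (p.coeff 1) * X + C (p.coeff 0) := by
  ext (_ | _ | _ | n)
  · simp
  · simp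
  · have h2 : p.coeff 2 = 1 := h ▸ hp.coeff_natDegree
    simp [coeff_X_pow, h2]
  · rw [coeff_eq_zero_of_natDegree_lt (by omega)]
    simp [coeff_X_pow]

theorem eval_neg_one_eq_zero_of_dvd_of_natDegree_eq_one [CommRing R] {p q : R[X]}
    (hq : q.Monic) (h1 : q.natDegree = 1) (h0 : q.coeff 0 = 1) (hdvd : q ∣ p) :
    p.eval (-1) = 0 := by
  obtain ⟨r, rfl⟩ := hdvd
  rw [hq.eq_X_add_C h1, h0]
  simp

theorem coeff_zero_eq_of_mul_eq [Semiring R] {p g q : R[X]} (h : p = g * q)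
    (hg : g.coeff 0 = 1) : q.coeff 0 = p.coeff 0 := by
  rw [h, mul_coeff_zero, hg, one_mul]

theorem sq_sub_mul_add_sub_two_eq_zero_of_dvd {K : Type*} [Field K] {a c β : K}
    (h : X ^ 2 + C β * X + 1 ∣ X ^ 4 + C a * X ^ 3 + C c * X ^ 2 + C a * X + 1) :
    β ^ 2 - a * β + c - 2 = 0 := by
  set e := β ^ 2 - a * β + c - 2
  have hdiv : X ^ 4 + C a * X ^ 3 + C c * X ^ 2 + C a * X + 1 =
      (X ^ 2 + C β * X + 1) * (X ^ 2 + C (a - β) * X + C (c - 1 - a * β + β ^ 2)) -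
        C e * (C β * X + 1) := by
    simp only [e, map_sub, map_add, map_mul, map_pow, map_one, map_ofNat]
    ring
  have hrem : X ^ 2 + C β * X + 1 ∣ C e * (C β * X + 1) := by
    rw [hdiv] at h
    simpa using (dvd_sub_right (dvd_mul_right _ _)).mp h
  have hzero := eq_zero_of_dvd_of_degree_lt hrem <| by
    rw [show (X ^ 2 + C β * X + 1 : K[X]).degree = 2 by compute_degree!]
    compute_degree; norm_num
  simpa using congrArg (eval 0) hzero

end Polynomial

theorem not_exists_monic_int_factor_of_quartic {p : ℚ[X]} (hpm : p.Monic)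
    (hdeg : p.natDegree = 4) (hp0 : p.coeff 0 = 1) (hroot : p.eval (-1) ≠ 0) {k : ℕ}
    (hk : (p.coeff k).den ≠ 1) (hquad : ∀ b : ℤ, ¬ X ^ 2 + C (b : ℚ) * X + 1 ∣ p) :
    ¬ ∃ g : ℤ[X], g.Monic ∧ Irreducible g ∧ g.coeff 0 = 1 ∧
      g.map (Int.castRingHom ℚ) ∣ p := by
  rintro ⟨g, hgm, hirr, hg0, q, hq⟩
  set G := g.map (Int.castRingHom ℚ)
  have hGm : G.Monic := hgm.map _
  have hG0 : G.coeff 0 = 1 := by simp [G, coeff_map, hg0]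
  have hqm : q.Monic := hGm.of_mul_monic_left (hq ▸ hpm)
  have hq0 : q.coeff 0 = 1 := hp0 ▸ coeff_zero_eq_of_mul_eq hq hG0
  have hdegs : g.natDegree + q.natDegree = 4 := by
    rw [← hgm.natDegree_map (Int.castRingHom ℚ), ← natDegree_mul hGm.ne_zero hqm.ne_zero,
      ← hq, hdeg]
  have hg_pos : g.natDegree ≠ 0 := fun h0 ↦
    hirr.not_isUnit (hgm.natDegree_eq_zero.mp h0 ▸ isUnit_one)
  obtain h1 | h2 | h3 | h4 : g.natDegree = 1 ∨ g.natDegree = 2 ∨ g.natDegree = 3 ∨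
      g.natDegree = 4 := by omega
  · exact hroot <| eval_neg_one_eq_zero_of_dvd_of_natDegree_eq_one hGm
      (by rwa [hgm.natDegree_map]) hG0 ⟨q, hq⟩
  · refine hquad (g.coeff 1) ?_
    have hG : G = X ^ 2 + C ((g.coeff 1 : ℤ) : ℚ) * X + 1 := by
      rw [hGm.eq_X_sq_add_C_mul_X_add_C (by rwa [hgm.natDegree_map]), hG0]
      simp [G, coeff_map]
    exact hG ▸ ⟨q, hq⟩
  · exact hroot <| eval_neg_one_eq_zero_of_dvd_of_natDegree_eq_one hqm (by omega) hq0
      (Dvd.intro_left G hq.symm)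
  · have hG : p = G := by rw [hq, hqm.natDegree_eq_zero.mp (by omega), mul_one]
    exact hk (by simp [hG, G, coeff_map])

theorem X_sq_add_intCast_mul_X_add_one_not_dvd_first (b : ℤ) :
    ¬ X ^ 2 + C (b : ℚ) * X + 1 ∣ X ^ 4 + C (4 / 3) * X ^ 3 + X ^ 2 + C (4 / 3) * X + 1 := by
  intro h
  have hb := sq_sub_mul_add_sub_two_eq_zero_of_dvd (K := ℚ) (a := 4 / 3) (c := 1)
    (by simpa only [map_one, one_mul] using h)
  have hbZ : 3 * b ^ 2 - 4 * b - 3 = 0 := by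
    exact_mod_cast (by linear_combination 3 * hb : (3 * b ^ 2 - 4 * b - 3 : ℚ) = 0)
  have : -1 ≤ b := by nlinarith
  have : b ≤ 2 := by nlinarith
  interval_cases b <;> omega

theorem X_sq_add_intCast_mul_X_add_one_not_dvd_second (b : ℤ) :
    ¬ X ^ 2 + C (b : ℚ) * X + 1 ∣ X ^ 4 + X ^ 3 + C (16 / 9) * X ^ 2 + X + 1 := by
  intro h
  have hb := sq_sub_mul_add_sub_two_eq_zero_of_dvd (K := ℚ) (a := 1) (c := 16 / 9)
    (by simpa only [map_one, one_mul] using h)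
  have hbZ : 9 * b ^ 2 - 9 * b - 2 = 0 := by
    exact_mod_cast (by linear_combination 9 * hb : (9 * b ^ 2 - 9 * b - 2 : ℚ) = 0)
  omega

/-- Neither `x⁴ + (4/3)x³ + x² + (4/3)x + 1` nor `x⁴ + x³ + (16/9)x² + x + 1`
has a monic irreducible factor in `ℤ[x]` with constant term `1` (dividing it in
`ℚ[x]`). -/
theorem stmt16 :
    (¬ ∃ g : Polynomial ℤ, g.Monic ∧ Irreducible g ∧ g.coeff 0 = 1 ∧
      (g.map (Int.castRingHom ℚ)) ∣
        (X ^ 4 + C (4/3 : ℚ) * X ^ 3 + X ^ 2 + C (4/3 : ℚ) * X + 1)) ∧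
    (¬ ∃ g : Polynomial ℤ, g.Monic ∧ Irreducible g ∧ g.coeff 0 = 1 ∧
      (g.map (Int.castRingHom ℚ)) ∣
        (X ^ 4 + X ^ 3 + C (16/9 : ℚ) * X ^ 2 + X + 1)) := by
  constructor
  · refine not_exists_monic_int_factor_of_quartic (k := 3) (by monicity!) (by compute_degree!)
      (by simp) (by norm_num) ?_ X_sq_add_intCast_mul_X_add_one_not_dvd_first
    norm_num [coeff_X_pow, coeff_one]
  · refine not_exists_monic_int_factor_of_quartic (k := 2) (by monicity!) (by compute_degree!)
      (by simp) (by norm_num) ?_ X_sq_add_intCast_mul_X_add_one_not_dvd_second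
    norm_num [coeff_X_pow, coeff_one, coeff_X]
end
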